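/- arXiv:1107.1744 — 2 statements merged into one kernel-verified Lean document; each statement's English description precedes it below -/
import Mathlib

section
/- Let f be convex on [0,1], let [l,r] ⊆ [0,1] with width w = r - l, and set x_l = l + w/4, x_c = l + w/2, x_r = l + 3w/4. Suppose the minimizer x* of f over [0,1] lies in [l,r], and suppose |f(u) - f(v)| ≤ 3γ for all u, v ∈ {x_l, x_c, x_r}. Then f(x) ≤ f(x*) + 12γ for each x ∈ {x_l, x_c, x_r}. -/
/-!
If `x* ≤ x_c`, then `x_c` lies between `x*` and `x_r` at distance `w/4` from `x_r`, while
`x_r - x* ≤ 3w/4`. Convexity along `x* ≤ x_c < x_r` then bounds the rise `f x_r - f x*` by three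
times the rise `f x_r - f x_c ≤ 3γ`, so `f x_r ≤ f x* + 9γ`, and every point of the triple is within
`3γ` of `f x_r`. The case `x_c < x*` is the mirror image, with `x_l` in place of `x_r`.
-/

section

variable {𝕜 : Type*} [Field 𝕜] [LinearOrder 𝕜] [IsStrictOrderedRing 𝕜] {s : Set 𝕜} {f : 𝕜 → 𝕜}
  {x y z k : 𝕜}

theorem ConvexOn.sub_mul_le_of_le_of_le (hf : ConvexOn 𝕜 s f) (hx : x ∈ s) (hz : z ∈ s)
    (hxy : x ≤ y) (hyz : y ≤ z) : (z - x) * f y ≤ (z - y) * f x + (y - x) * f z := by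
  rcases hxy.eq_or_lt with rfl | hxy
  · simp
  rcases hyz.eq_or_lt with rfl | hyz
  · simp
  exact hf.secant_mono_aux1 hx hz hxy hyz

theorem ConvexOn.sub_le_mul_sub_of_le_of_lt (hf : ConvexOn 𝕜 s f) (hx : x ∈ s) (hz : z ∈ s)
    (hxy : x ≤ y) (hyz : y < z) (hfxz : f x ≤ f z) (hk : z - x ≤ k * (z - y)) :
    f z - f x ≤ k * (f z - f y) := by
  have h := hf.sub_mul_le_of_le_of_le hx hz hxy hyz.le
  have hxz : 0 < z - x := by linarith
  have hk0 : 0 ≤ k := (pos_of_mul_pos_left (hxz.trans_le hk) (sub_pos.2 hyz).le).le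
  refine le_of_mul_le_mul_left ?_ hxz
  calc (z - x) * (f z - f x) ≤ k * (z - y) * (f z - f x) :=
        mul_le_mul_of_nonneg_right hk (sub_nonneg.2 hfxz)
    _ = k * ((z - y) * (f z - f x)) := by ring
    _ ≤ k * ((z - x) * (f z - f y)) := mul_le_mul_of_nonneg_left (by linarith) hk0
    _ = (z - x) * (k * (f z - f y)) := by ring

theorem ConvexOn.sub_le_mul_sub_of_lt_of_le (hf : ConvexOn 𝕜 s f) (hx : x ∈ s) (hz : z ∈ s)
    (hxy : x < y) (hyz : y ≤ z) (hfzx : f z ≤ f x) (hk : z - x ≤ k * (y - x)) :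
    f x - f z ≤ k * (f x - f y) := by
  have h := hf.sub_mul_le_of_le_of_le hx hz hxy.le hyz
  have hxz : 0 < z - x := by linarith
  have hk0 : 0 ≤ k := (pos_of_mul_pos_left (hxz.trans_le hk) (sub_pos.2 hxy).le).le
  refine le_of_mul_le_mul_left ?_ hxz
  calc (z - x) * (f x - f z) ≤ k * (y - x) * (f x - f z) :=
        mul_le_mul_of_nonneg_right hk (sub_nonneg.2 hfzx)
    _ = k * ((y - x) * (f x - f z)) := by ring
    _ ≤ k * ((z - x) * (f x - f y)) := mul_le_mul_of_nonneg_left (by linarith) hk0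
    _ = (z - x) * (k * (f x - f y)) := by ring

end

theorem stmt_1_general (f : ℝ → ℝ) (hf : ConvexOn ℝ (Set.Icc (0:ℝ) 1) f)
    (l r γ xstar : ℝ) (hl : 0 ≤ l) (hlr : l < r) (hr : r ≤ 1)
    (xl xc xr : ℝ)
    (hxl : xl = l + (r - l)/4) (hxc : xc = l + (r - l)/2) (hxr : xr = l + 3*(r - l)/4)
    (hxstar : xstar ∈ Set.Icc l r)
    (hmin : ∀ y ∈ Set.Icc (0:ℝ) 1, f xstar ≤ f y)
    (hflat : ∀ u ∈ ({xl, xc, xr} : Set ℝ), ∀ v ∈ ({xl, xc, xr} : Set ℝ),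
      |f u - f v| ≤ 3*γ) :
    ∀ x ∈ ({xl, xc, xr} : Set ℝ), f x ≤ f xstar + 12*γ := by
  obtain ⟨hls, hsr⟩ := hxstar
  have hs : xstar ∈ Set.Icc (0:ℝ) 1 := ⟨by linarith, by linarith⟩
  have hxl01 : xl ∈ Set.Icc (0:ℝ) 1 := ⟨by linarith, by linarith⟩
  have hxr01 : xr ∈ Set.Icc (0:ℝ) 1 := ⟨by linarith, by linarith⟩
  have hle : ∀ u ∈ ({xl, xc, xr} : Set ℝ), ∀ v ∈ ({xl, xc, xr} : Set ℝ), f u ≤ f v + 3*γ :=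
    fun u hu v hv => by linarith [(abs_le.mp (hflat u hu v hv)).2]
  intro x hx
  rcases le_or_gt xstar xc with hsc | hcs
  · have hrise := hf.sub_le_mul_sub_of_le_of_lt (k := 3) hs hxr01 hsc (by linarith)
      (hmin xr hxr01) (by linarith)
    linarith [hle x hx xr (by simp), hle xr (by simp) xc (by simp)]
  · have hrise := hf.sub_le_mul_sub_of_lt_of_le (k := 3) hxl01 hs (by linarith) hcs.le
      (hmin xl hxl01) (by linarith)
    linarith [hle x hx xl (by simp), hle xl (by simp) xc (by simp)]

theorem stmt_1 (f : ℝ → ℝ) (hf : ConvexOn ℝ (Set.Icc (0:ℝ) 1) f)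
    (l r γ xstar : ℝ) (hl : 0 ≤ l) (hlr : l < r) (hr : r ≤ 1) (hγ : 0 < γ)
    (xl xc xr : ℝ)
    (hxl : xl = l + (r - l)/4) (hxc : xc = l + (r - l)/2) (hxr : xr = l + 3*(r - l)/4)
    (hxstar : xstar ∈ Set.Icc l r)
    (hmin : ∀ y ∈ Set.Icc (0:ℝ) 1, f xstar ≤ f y)
    (hflat : ∀ u ∈ ({xl, xc, xr} : Set ℝ), ∀ v ∈ ({xl, xc, xr} : Set ℝ),
      |f u - f v| ≤ 3*γ) :
    ∀ x ∈ ({xl, xc, xr} : Set ℝ), f x ≤ f xstar + 12*γ :=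
  stmt_1_general f hf l r γ xstar hl hlr hr xl xc xr hxl hxc hxr hxstar hmin hflat
end

section
/- Let f be convex on [0,1] with minimizer x* ∈ [l, r] ⊆ [0,1], and let x_c = (l+r)/2 and x_r = l + 3(r-l)/4. If x* ≤ x_c, then f(x*) ≥ f(x_r) - 3|f(x_c) - f(x_r)|. -/
/-!
The midpoint `x_c` is a convex combination of `x*` and `x_r` in which `x*` has weight
`(x_r - x_c)/(x_r - x*) ≥ 1/3`, because `x_r - x* ≤ x_r - l = 3 (x_r - x_c)`. Convexity at `x_c`
therefore bounds the drop `f x_r - f x*` by three times the drop `f x_r - f x_c`.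
-/

theorem ConvexOn.sub_mul_le_sub_mul {s : Set ℝ} {f : ℝ → ℝ} (hf : ConvexOn ℝ s f) {x y z : ℝ}
    (hx : x ∈ s) (hz : z ∈ s) (hxy : x ≤ y) (hyz : y < z) :
    (z - x) * (f y - f z) ≤ (z - y) * (f x - f z) := by
  rcases hxy.eq_or_lt with rfl | hxy
  · exact le_rfl
  · linarith [hf.secant_mono_aux1 hx hz hxy hyz]

theorem ConvexOn.le_add_mul_abs_sub {s : Set ℝ} {f : ℝ → ℝ} (hf : ConvexOn ℝ s f) {x y z k : ℝ}
    (hx : x ∈ s) (hz : z ∈ s) (hxy : x ≤ y) (hyz : y < z) (hk : z - x ≤ k * (z - y)) :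
    f z ≤ f x + k * |f y - f z| := by
  have hzy : 0 < z - y := sub_pos.2 hyz
  have hk0 : 0 < k := pos_of_mul_pos_left (by linarith) hzy.le
  have key := hf.sub_mul_le_sub_mul hx hz hxy hyz
  rcases le_or_gt (f z) (f x) with hfzx | hfxz
  · nlinarith [abs_nonneg (f y - f z)]
  · have hfyz : f y ≤ f z := by nlinarith
    have : (z - y) * (f z - f x) ≤ (z - y) * (k * (f z - f y)) := by nlinarith
    rw [abs_of_nonpos (sub_nonpos.2 hfyz)]
    linarith [le_of_mul_le_mul_left this hzy]

theorem stmt_2_general (f : ℝ → ℝ) (hf : ConvexOn ℝ (Set.Icc (0:ℝ) 1) f)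
    (l r xstar : ℝ) (hl : 0 ≤ l) (hlr : l < r) (hr : r ≤ 1)
    (xc xr : ℝ) (hxc : xc = l + (r - l)/2) (hxr : xr = l + 3*(r - l)/4)
    (hxstar : xstar ∈ Set.Icc l r) (hxstarc : xstar ≤ xc) :
    f xstar ≥ f xr - 3 * |f xc - f xr| := by
  obtain ⟨hlx, -⟩ := hxstar
  subst hxc hxr
  have := hf.le_add_mul_abs_sub (z := l + 3 * (r - l) / 4) (k := 3) ⟨by linarith, by linarith⟩ ⟨by linarith, by linarith⟩
    hxstarc (by linarith) (by linarith)
  linarith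

theorem stmt_2 (f : ℝ → ℝ) (hf : ConvexOn ℝ (Set.Icc (0:ℝ) 1) f)
    (l r xstar : ℝ) (hl : 0 ≤ l) (hlr : l < r) (hr : r ≤ 1)
    (xc xr : ℝ) (hxc : xc = l + (r - l)/2) (hxr : xr = l + 3*(r - l)/4)
    (hxstar : xstar ∈ Set.Icc l r) (hxstarc : xstar ≤ xc)
    (hmin : ∀ y ∈ Set.Icc (0:ℝ) 1, f xstar ≤ f y) :
    f xstar ≥ f xr - 3 * |f xc - f xr| :=
  stmt_2_general f hf l r xstar hl hlr hr xc xr hxc hxr hxstar hxstarc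
end
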